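/- arXiv:1801.05197 — 4 statements merged into one kernel-verified Lean document; each statement's English description precedes it below -/
import Mathlib

section
/- For a positive integer n divisible by 4, the quadruple sum \sum_{j=(n+8)/4}^{n/2} \sum_{i=(n+2)/2-j}^{j-2} \sum_{k=i+1}^{j-1} \sum_{l=j+1}^{n-k} 1 equals n^2(n-2)(n-4)/384. -/
/-! Write `n = 4m`. The innermost sum counts the `4m - j - k` values of `l`, and each remaining
sum is a polynomial summed over an integer interval, which telescopes against an explicit
antiderivative. Over `ℚ` this gives, level by level,
`∑ₖ (4m - j - k) = (j - 1 - i)(8m - 3j - i)/2`,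
`∑ᵢ (j - 1 - i)(8m - 3j - i)/2 = 2(2j - 2m - 1)(j - m - 1)(5m - 2j)/3`, and
`∑ⱼ 2(2j - 2m - 1)(j - m - 1)(5m - 2j)/3 = m²(2m - 1)(m - 1)/3 = n²(n - 2)(n - 4)/384`. -/

open Finset

theorem Finset.sum_Icc_eq_sub_of_sub_eq {M : Type*} [AddCommGroup M] {f F : ℤ → M}
    (hF : ∀ x, F x - F (x - 1) = f x) {a b : ℤ} (hab : a ≤ b + 1) :
    ∑ x ∈ Icc a b, f x = F b - F (a - 1) := by
  replace hab : a - 1 ≤ b := by omega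
  induction b, hab using Int.leInduction with
  | base => simp
  | succ b hab ih =>
    rw [← insert_Icc_right_eq_Icc_add_one (by omega), sum_insert (by simp), ih, ← hF,
      add_sub_cancel_right]
    abel

theorem Finset.sum_Icc_one {R : Type*} [AddCommGroupWithOne R] {a b : ℤ} (hab : a ≤ b + 1) :
    ∑ _x ∈ Icc a b, (1 : R) = b + 1 - a := by
  rw [sum_Icc_eq_sub_of_sub_eq (F := fun x => (x : R)) (fun x => by push_cast; abel) hab]
  push_cast
  abel

theorem sum_Icc_const_sub (c : ℚ) {a b : ℤ} (hab : a ≤ b + 1) :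
    ∑ k ∈ Icc a b, (c - k) = (b + 1 - a) * (2 * c - a - b) / 2 := by
  rw [sum_Icc_eq_sub_of_sub_eq (F := fun x => c * x - x * (x + 1) / 2)
    (fun x => by push_cast; ring) hab]
  push_cast
  ring

theorem sum_Icc_middle_level (m j : ℤ) (hj : m + 1 ≤ j) :
    ∑ i ∈ Icc (2 * m + 1 - j) (j - 2), ((j : ℚ) - 1 - i) * (8 * m - 3 * j - i) / 2 =
      2 * (2 * j - 2 * m - 1) * (j - m - 1) * (5 * m - 2 * j) / 3 := by
  rw [sum_Icc_eq_sub_of_sub_eq (F := fun x : ℤ =>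
      ((4 * m - j) * (j - 1) - (j - 1) * j / 2) * (x : ℚ) - (4 * m - j) * x * (x + 1) / 2
        + x * (x + 1) * (x + 2) / 6)
    (fun x => by push_cast; ring) (by omega)]
  push_cast
  ring

theorem sum_Icc_outer_level (m : ℤ) (hm : 1 ≤ m) :
    ∑ j ∈ Icc (m + 2) (2 * m), 2 * (2 * (j : ℚ) - 2 * m - 1) * (j - m - 1) * (5 * m - 2 * j) / 3 =
      m ^ 2 * (2 * m - 1) * (m - 1) / 3 := by
  rw [sum_Icc_eq_sub_of_sub_eq (F := fun x : ℤ =>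
      ((x : ℚ) - m) * (x - m - 1) * (m + (4 * m - 2) * (x - m) - 2 * (x - m) ^ 2) / 3)
    (fun x => by push_cast; ring) (by omega)]
  push_cast
  ring

theorem stmt_0 (n : ℤ) (hn : 0 < n) (h4 : 4 ∣ n) :
    (∑ j ∈ Finset.Icc ((n+8)/4) (n/2), ∑ i ∈ Finset.Icc ((n+2)/2 - j) (j-2),
      ∑ k ∈ Finset.Icc (i+1) (j-1), ∑ l ∈ Finset.Icc (j+1) (n-k), (1:ℤ))
      = n^2*(n-2)*(n-4)/384 := by
  obtain ⟨m, rfl⟩ := h4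
  have hm : 1 ≤ m := by omega
  rw [show (4 * m + 8) / 4 = m + 2 by omega, show 4 * m / 2 = 2 * m by omega,
    show (4 * m + 2) / 2 = 2 * m + 1 by omega]
  set S := ∑ j ∈ Icc (m + 2) (2 * m), ∑ i ∈ Icc (2 * m + 1 - j) (j - 2),
    ∑ k ∈ Icc (i + 1) (j - 1), ∑ _l ∈ Icc (j + 1) (4 * m - k), (1 : ℤ)
  have hS : (S : ℚ) = m ^ 2 * (2 * m - 1) * (m - 1) / 3 := calc
    (S : ℚ) = ∑ j ∈ Icc (m + 2) (2 * m), ∑ i ∈ Icc (2 * m + 1 - j) (j - 2),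
        ∑ k ∈ Icc (i + 1) (j - 1), ((4 * m - j : ℚ) - k) := by
      push_cast [S]
      refine sum_congr rfl fun j hj => sum_congr rfl fun i hi => sum_congr rfl fun k hk => ?_
      simp only [mem_Icc] at hj hi hk
      rw [sum_Icc_one (by omega)]
      push_cast
      ring
    _ = ∑ j ∈ Icc (m + 2) (2 * m), ∑ i ∈ Icc (2 * m + 1 - j) (j - 2),
        ((j : ℚ) - 1 - i) * (8 * m - 3 * j - i) / 2 := by
      refine sum_congr rfl fun j hj => sum_congr rfl fun i hi => ?_
      simp only [mem_Icc] at hj hi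
      rw [sum_Icc_const_sub _ (by omega)]
      push_cast
      ring
    _ = ∑ j ∈ Icc (m + 2) (2 * m),
        2 * (2 * (j : ℚ) - 2 * m - 1) * (j - m - 1) * (5 * m - 2 * j) / 3 :=
      sum_congr rfl fun j hj => sum_Icc_middle_level m j (by simp only [mem_Icc] at hj; omega)
    _ = m ^ 2 * (2 * m - 1) * (m - 1) / 3 := sum_Icc_outer_level m hm
  have key : (4 * m) ^ 2 * (4 * m - 2) * (4 * m - 4) = 384 * S := by
    have : ((4 * m) ^ 2 * (4 * m - 2) * (4 * m - 4) : ℚ) = 384 * S := by rw [hS]; ring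
    exact_mod_cast this
  rw [key, Int.mul_ediv_cancel_left _ (by norm_num)]
end

section
/- For a positive integer n with n ≡ 0 (mod 4) and n ≥ 4, the sum \sum_{j=3}^{n/4} \sum_{i=1}^{j-2} ( \sum_{k=i+1}^{j-1} \sum_{l=j+1}^{n/2-k} 1 + \sum_{k=i+1}^{j-1} \sum_{l=n+1-k}^{n} 1 ) equals n(n-4)(n-8)(5n-12)/6144. -/
/-!
With `n = 4m`, the two innermost sums count `max (2m - k - j) 0` and `k` points, and on the
range of summation (`k < j ≤ m`) these add up to `2m - j`, independently of `k`. The sum thus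
collapses to `∑_{3 ≤ j ≤ m} ∑_{1 ≤ i ≤ j-2} (j - 1 - i)(2m - j)`, a polynomial sum evaluated by
telescoping.
-/

open Finset

theorem Int.sum_Icc_sub_pred {G : Type*} [AddCommGroup G] (f : ℤ → G) {a b : ℤ} (h : a - 1 ≤ b) :
    ∑ j ∈ Icc a b, (f j - f (j - 1)) = f b - f (a - 1) := by
  induction b, h using Int.leInduction with
  | base => simp
  | succ b hb ih =>
    rw [← insert_Icc_right_eq_Icc_add_one (by omega), sum_insert (by simp), ih,
      add_sub_cancel_right]
    abel

theorem sum_Icc_one_add_sum_Icc_one_eq (N n j k : ℤ) (hk : 0 ≤ k) (hjk : j + k ≤ N) :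
    ∑ _l ∈ Icc (j + 1) (N - k), (1 : ℤ) + ∑ _l ∈ Icc (n + 1 - k) n, (1 : ℤ) = N - j := by
  simp only [sum_const, Int.card_Icc, nsmul_eq_mul, mul_one]
  omega

theorem two_mul_sum_Icc_sub {j : ℤ} (hj : 2 ≤ j) :
    2 * ∑ i ∈ Icc 1 (j - 2), (j - 1 - i) = (j - 1) * (j - 2) := by
  have := Int.sum_Icc_sub_pred (fun i => -((j - 1 - i) * (j - 2 - i))) (a := 1) (b := j - 2)
    (by omega)
  rw [mul_sum]
  convert this using 1
  · exact sum_congr rfl fun i _ => by ring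
  · ring

theorem sum_Icc_sum_Icc_mul_eq {m : ℤ} (hm : 1 ≤ m) :
    24 * ∑ j ∈ Icc 3 m, ∑ i ∈ Icc 1 (j - 2), (j - 1 - i) * (2 * m - j)
      = m * (m - 1) * (m - 2) * (5 * m - 3) := by
  obtain rfl | hm := hm.eq_or_lt
  · simp
  -- a discrete antiderivative of `12 (j - 1) (j - 2) (2m - j)` vanishing at `j = 2`
  have := Int.sum_Icc_sub_pred (fun j => j * (j - 1) * (j - 2) * (8 * m - 3 * (j + 1)))
    (a := 3) (b := m) (by omega)
  rw [mul_sum]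
  convert this using 1
  · refine sum_congr rfl fun j hj => ?_
    rw [← sum_mul]
    linear_combination 12 * (2 * m - j) * two_mul_sum_Icc_sub (j := j) (by grind)
  · ring

theorem stmt_2 (n : ℤ) (hn : 4 ≤ n) (h4 : 4 ∣ n) :
    (∑ j ∈ Finset.Icc 3 (n/4), ∑ i ∈ Finset.Icc 1 (j-2),
      ((∑ k ∈ Finset.Icc (i+1) (j-1), ∑ l ∈ Finset.Icc (j+1) (n/2 - k), (1:ℤ)) +
       (∑ k ∈ Finset.Icc (i+1) (j-1), ∑ l ∈ Finset.Icc (n+1-k) n, (1:ℤ))))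
      = n*(n-4)*(n-8)*(5*n-12)/6144 := by
  obtain ⟨m, rfl⟩ := h4
  rw [show 4 * m / 4 = m by omega, show 4 * m / 2 = 2 * m by omega]
  have hsummand : ∀ j ∈ Icc 3 m, ∀ i ∈ Icc 1 (j - 2),
      ∑ k ∈ Icc (i + 1) (j - 1), ∑ _l ∈ Icc (j + 1) (2 * m - k), (1 : ℤ) +
        ∑ k ∈ Icc (i + 1) (j - 1), ∑ _l ∈ Icc (4 * m + 1 - k) (4 * m), (1 : ℤ)
        = (j - 1 - i) * (2 * m - j) := by
    intro j hj i hi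
    simp only [mem_Icc] at hi hj
    rw [← sum_add_distrib, sum_congr rfl fun k hk =>
      sum_Icc_one_add_sum_Icc_one_eq (2 * m) (4 * m) j k (by grind) (by grind),
      sum_const, Int.card_Icc, nsmul_eq_mul]
    congr 1
    omega
  rw [sum_congr rfl fun j hj => sum_congr rfl (hsummand j hj),
    Int.ediv_eq_of_eq_mul_left (by norm_num)]
  linear_combination -256 * sum_Icc_sum_Icc_mul_eq (m := m) (by omega)
end

section
/- Let n ≥ 5 be odd, m = (n+1)/2, and let a be the entries of the matrix M_n (odd case). Define σ(i,j) = #{(k,l) : i < k < j < l ≤ n, a(k,l) = a(i,j)} and σ̃(i,j) = #{(k,l) : 1 ≤ k < i < l < j, a(k,l) = a(i,j)}, and c(i,j) = σ(i,j) + σ̃(i,j). Then c(m,n) = c(1,m) + c(2,n) + 1. -/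
/-!
Write `n = 2m - 1`. Three of the six counts vanish outright: `σ(m,n)` and `σ(2,n)` would need a
column `l > n`, and `σ̃(1,m)` a row `k < 1`. In the rows `k < m`, an entry right of column `m`
equals `1` exactly when `l ≤ n - k`, so `σ̃(m,n)` and `σ(1,m)` count the same ones except those of
row `1`, of which there are `m - 2`. Finally `σ̃(2,n)` counts the `m - 3` entries `-1` of row `1`
in columns `3, …, m - 1`.
-/

/-- Entry `a_{(i,j)}` of the matrix `M_n` for odd `n`. -/
def Mn (n i j : ℤ) : ℤ :=
  if j ≤ i + 1 ∨ (i, j) = (1, n) then 0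
  else if ((n+3)/2 - i ≤ j ∧ j ≤ n - i) ∨ j ≥ (3*n+1)/2 - i then 1
  else -1

/-- `σ(i,j)`: number of pairs `(k,l)` with `i < k < j < l ≤ n` and `a(k,l) = a(i,j)`. -/
noncomputable def sigma' (n i j : ℤ) : ℕ :=
  ((Finset.Icc 1 n ×ˢ Finset.Icc 1 n).filter
    (fun p => i < p.1 ∧ p.1 < j ∧ j < p.2 ∧ Mn n p.1 p.2 = Mn n i j)).card

/-- `σ̃(i,j)`: number of pairs `(k,l)` with `1 ≤ k < i < l < j` and `a(k,l) = a(i,j)`. -/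
noncomputable def sigmaTilde (n i j : ℤ) : ℕ :=
  ((Finset.Icc 1 n ×ˢ Finset.Icc 1 n).filter
    (fun p => 1 ≤ p.1 ∧ p.1 < i ∧ i < p.2 ∧ p.2 < j ∧ Mn n p.1 p.2 = Mn n i j)).card

/-- `c(i,j) = σ(i,j) + σ̃(i,j)`. -/
noncomputable def cD (n i j : ℤ) : ℕ := sigma' n i j + sigmaTilde n i j

lemma sigma'_eq_zero_of_le {n i j : ℤ} (hj : n ≤ j) : sigma' n i j = 0 := by
  refine Finset.card_eq_zero.mpr (Finset.filter_eq_empty_iff.mpr ?_)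
  rintro ⟨k, l⟩ hkl ⟨-, -, hjl, -⟩
  have := (Finset.mem_Icc.mp (Finset.mem_product.mp hkl).2).2
  omega

lemma sigmaTilde_one (n j : ℤ) : sigmaTilde n 1 j = 0 := by
  refine Finset.card_eq_zero.mpr (Finset.filter_eq_empty_iff.mpr ?_)
  rintro ⟨k, l⟩ - ⟨hk, hk1, -⟩
  omega

section OddSize

variable {n m : ℤ}

lemma Mn_eq_one_iff_of_lt_of_lt (hnm : n = 2 * m - 1) {k l : ℤ}
    (hk : 1 ≤ k) (hkm : k < m) (hml : m < l) (hln : l ≤ n) :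
    Mn n k l = 1 ↔ l ≤ n - k := by
  simp only [Mn, Prod.mk.injEq]
  split_ifs <;> norm_num <;> omega

lemma Mn_one_eq_neg_one_iff (hnm : n = 2 * m - 1) {l : ℤ} (hl : 2 < l) (hln : l < n) :
    Mn n 1 l = -1 ↔ l < m := by
  simp only [Mn, Prod.mk.injEq]
  split_ifs <;> norm_num <;> omega

lemma Mn_mid_right (hnm : n = 2 * m - 1) (hm : 3 ≤ m) : Mn n m n = 1 := by
  simp only [Mn, Prod.mk.injEq]
  split_ifs <;> norm_num <;> omega

lemma Mn_one_mid (hnm : n = 2 * m - 1) (hm : 3 ≤ m) : Mn n 1 m = 1 := by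
  simp only [Mn, Prod.mk.injEq]
  split_ifs <;> norm_num <;> omega

lemma Mn_two_right (hnm : n = 2 * m - 1) (hm : 3 ≤ m) : Mn n 2 n = -1 := by
  simp only [Mn, Prod.mk.injEq]
  split_ifs <;> norm_num <;> omega

noncomputable def crossingOnes (n m : ℤ) : Finset (ℤ × ℤ) :=
  (Finset.Icc 1 n ×ˢ Finset.Icc 1 n).filter
    (fun p => 1 ≤ p.1 ∧ p.1 < m ∧ m < p.2 ∧ p.2 ≤ n - p.1)

lemma sigmaTilde_mid_right (hnm : n = 2 * m - 1) (hm : 3 ≤ m) :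
    sigmaTilde n m n = (crossingOnes n m).card := by
  rw [sigmaTilde, crossingOnes, Mn_mid_right hnm hm]
  congr 1
  refine Finset.filter_congr fun ⟨k, l⟩ hkl => ?_
  simp only [Finset.mem_product, Finset.mem_Icc] at hkl
  constructor
  · rintro ⟨hk, hkm, hml, -, hM⟩
    exact ⟨hk, hkm, hml, (Mn_eq_one_iff_of_lt_of_lt hnm hk hkm hml hkl.2.2).mp hM⟩
  · rintro ⟨hk, hkm, hml, hlk⟩
    exact ⟨hk, hkm, hml, by omega, (Mn_eq_one_iff_of_lt_of_lt hnm hk hkm hml hkl.2.2).mpr hlk⟩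

lemma sigma'_one_mid (hnm : n = 2 * m - 1) (hm : 3 ≤ m) :
    sigma' n 1 m = ((crossingOnes n m).filter (fun p => 1 < p.1)).card := by
  rw [sigma', crossingOnes, Finset.filter_filter, Mn_one_mid hnm hm]
  congr 1
  refine Finset.filter_congr fun ⟨k, l⟩ hkl => ?_
  simp only [Finset.mem_product, Finset.mem_Icc] at hkl
  constructor
  · rintro ⟨hk, hkm, hml, hM⟩
    exact ⟨⟨hk.le, hkm, hml, (Mn_eq_one_iff_of_lt_of_lt hnm hk.le hkm hml hkl.2.2).mp hM⟩, hk⟩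
  · rintro ⟨⟨-, hkm, hml, hlk⟩, hk⟩
    exact ⟨hk, hkm, hml, (Mn_eq_one_iff_of_lt_of_lt hnm hk.le hkm hml hkl.2.2).mpr hlk⟩

lemma card_crossingOnes_filter_fst_eq_one (hnm : n = 2 * m - 1) (hm : 3 ≤ m) :
    (((crossingOnes n m).filter (fun p => ¬ 1 < p.1)).card : ℤ) = m - 2 := by
  have hrow : (crossingOnes n m).filter (fun p => ¬ 1 < p.1)
      = {1} ×ˢ Finset.Icc (m + 1) (n - 1) := by
    ext ⟨k, l⟩
    simp only [crossingOnes, Finset.mem_filter, Finset.mem_product, Finset.mem_Icc,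
      Finset.mem_singleton]
    omega
  rw [hrow, Finset.card_product, Finset.card_singleton, one_mul, Int.card_Icc]
  omega

lemma sigmaTilde_two_right (hnm : n = 2 * m - 1) (hm : 3 ≤ m) :
    (sigmaTilde n 2 n : ℤ) = m - 3 := by
  have hrow : (Finset.Icc 1 n ×ˢ Finset.Icc 1 n).filter
      (fun p => 1 ≤ p.1 ∧ p.1 < 2 ∧ 2 < p.2 ∧ p.2 < n ∧ Mn n p.1 p.2 = -1)
      = {1} ×ˢ Finset.Icc 3 (m - 1) := by
    ext ⟨k, l⟩
    simp only [Finset.mem_filter, Finset.mem_product, Finset.mem_Icc, Finset.mem_singleton]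
    constructor
    · rintro ⟨-, hk1, hk2, hl2, hln, hM⟩
      obtain rfl : k = 1 := by omega
      have := (Mn_one_eq_neg_one_iff hnm hl2 hln).mp hM
      omega
    · rintro ⟨rfl, hl3, hlm⟩
      exact ⟨by omega, by omega, by omega, by omega, by omega,
        (Mn_one_eq_neg_one_iff hnm (by omega) (by omega)).mpr (by omega)⟩
  rw [sigmaTilde, Mn_two_right hnm hm, hrow, Finset.card_product, Finset.card_singleton, one_mul,
    Int.card_Icc]
  omega

end OddSize

theorem stmt_10 (n : ℤ) (hn : 5 ≤ n) (hodd : Odd n) (m : ℤ) (hm : m = (n+1)/2) :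
    cD n m n = cD n 1 m + cD n 2 n + 1 := by
  have hnm : n = 2 * m - 1 := by obtain ⟨t, rfl⟩ := hodd; omega
  have hm3 : 3 ≤ m := by omega
  have hsplit := Finset.card_filter_add_card_filter_not (s := crossingOnes n m) (fun p => 1 < p.1)
  have hrow := card_crossingOnes_filter_fst_eq_one hnm hm3
  have htwo := sigmaTilde_two_right hnm hm3
  simp only [cD, sigma'_eq_zero_of_le le_rfl, sigmaTilde_one, sigmaTilde_mid_right hnm hm3,
    sigma'_one_mid hnm hm3]
  omega
end

section
/- For a positive integer n with n ≡ 3 (mod 4), the sum \sum_{i=(n+1)/2}^{(3n-5)/4} \sum_{j=(3n+3)/4}^{(3n-1)/2-i} \sum_{l=j+1}^{(3n-3)/2-i} \sum_{k=i+1}^{(3n-1)/2-l} 1 equals (n+1)(n-3)(n-7)(n-11)/6144. -/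
/-!
Write `n = 4m + 3` and evaluate the sums from the inside out. Each is a hockey-stick sum of
binomial coefficients: the sum over `k` is `C(6m+4-i-l, 1)`, the one over `l` is
`C(6m+4-i-j, 2)`, the one over `j` is `C(3m+2-i, 3)`, and the one over `i` is
`C(m+1, 4) = (n+1)(n-3)(n-7)(n-11)/6144`. Taking the binomials as `Ring.choose` on `ℤ`,
the hockey stick is a telescoping of Pascal's rule.
-/

open Finset

theorem Int.sum_Icc_sub_succ {M : Type*} [AddCommGroup M] (F : ℤ → M) {a c : ℤ} (h : a ≤ c + 1) :
    ∑ j ∈ Icc a c, (F j - F (j + 1)) = F a - F (c + 1) := by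
  induction a, h using Int.leInductionDown with
  | base => simp
  | pred a ha ih =>
    rw [← add_sum_Ioc_eq_sum_Icc (by omega), ← Icc_add_one_left_eq_Ioc, sub_add_cancel, ih]
    abel

theorem Int.ringChoose_eq_zero_of_lt {x : ℤ} {k : ℕ} (h₀ : 0 ≤ x) (hk : x < k) :
    Ring.choose x k = 0 := by
  lift x to ℕ using h₀
  rw [Ring.choose_natCast, Nat.choose_eq_zero_of_lt (by omega), Nat.cast_zero]

theorem Int.ringChoose_four (x : ℤ) :
    24 * Ring.choose x 4 = x * (x - 1) * (x - 2) * (x - 3) := by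
  have h := Ring.descPochhammer_eq_factorial_smul_choose x 4
  norm_num [← Polynomial.eval_eq_smeval, descPochhammer_succ_eval, Nat.factorial] at h
  linear_combination -h

/-- Hockey-stick identity; the condition `0 ≤ b - c ≤ r` makes the telescoping tail
`Ring.choose (b - c) (r + 1)` vanish. -/
theorem Int.sum_Icc_ringChoose_sub {a b c : ℤ} {r : ℕ} (hab : a ≤ b + 1) (hcb : c ≤ b)
    (hbc : b ≤ c + r) :
    ∑ j ∈ Icc a c, Ring.choose (b - j) r = Ring.choose (b + 1 - a) (r + 1) := by
  rcases le_or_gt a (c + 1) with hac | hca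
  · have hstep (j : ℤ) : Ring.choose (b - j) r
        = Ring.choose (b + 1 - j) (r + 1) - Ring.choose (b + 1 - (j + 1)) (r + 1) := by
      rw [show b + 1 - j = b - j + 1 by ring, Ring.choose_succ_succ]
      ring_nf
    rw [sum_congr rfl fun j _ => hstep j,
      Int.sum_Icc_sub_succ (fun j => Ring.choose (b + 1 - j) (r + 1)) hac,
      show b + 1 - (c + 1) = b - c by ring,
      Int.ringChoose_eq_zero_of_lt (x := b - c) (by omega) (by omega), sub_zero]
  · rw [Icc_eq_empty (by omega), sum_empty, Int.ringChoose_eq_zero_of_lt (by omega) (by omega)]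

theorem stmt_16 (n : ℤ) (hn : 0 < n) (h4 : n % 4 = 3) :
    (∑ i ∈ Finset.Icc ((n+1)/2) ((3*n-5)/4), ∑ j ∈ Finset.Icc ((3*n+3)/4) ((3*n-1)/2 - i),
      ∑ l ∈ Finset.Icc (j+1) ((3*n-3)/2 - i), ∑ k ∈ Finset.Icc (i+1) ((3*n-1)/2 - l), (1:ℤ))
      = (n+1)*(n-3)*(n-7)*(n-11)/6144 := by
  obtain ⟨m, hm, rfl⟩ : ∃ m : ℤ, 0 ≤ m ∧ n = 4 * m + 3 := ⟨n / 4, by omega, by omega⟩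
  rw [show (4 * m + 3 + 1) / 2 = 2 * m + 2 by omega,
    show (3 * (4 * m + 3) - 5) / 4 = 3 * m + 1 by omega,
    show (3 * (4 * m + 3) + 3) / 4 = 3 * m + 3 by omega,
    show (3 * (4 * m + 3) - 1) / 2 = 6 * m + 4 by omega,
    show (3 * (4 * m + 3) - 3) / 2 = 6 * m + 3 by omega]
  have hk (i l : ℤ) (hl : l ≤ 6 * m + 3 - i) :
      ∑ k ∈ Icc (i + 1) (6 * m + 4 - l), (1 : ℤ) = Ring.choose (6 * m + 4 - i - l) 1 := by
    rw [Ring.choose_one_right, sum_const, Int.card_Icc, nsmul_one]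
    omega
  have hl (i j : ℤ) (hj : j ≤ 6 * m + 4 - i) :
      ∑ l ∈ Icc (j + 1) (6 * m + 3 - i), ∑ k ∈ Icc (i + 1) (6 * m + 4 - l), (1 : ℤ)
        = Ring.choose (6 * m + 4 - i - j) 2 := by
    rw [sum_congr rfl fun l hl' => hk i l (mem_Icc.mp hl').2,
      Int.sum_Icc_ringChoose_sub (by omega) (by omega) (by omega)]
    ring_nf
  have hj (i : ℤ) (hi : i ≤ 3 * m + 1) :
      ∑ j ∈ Icc (3 * m + 3) (6 * m + 4 - i), ∑ l ∈ Icc (j + 1) (6 * m + 3 - i),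
        ∑ k ∈ Icc (i + 1) (6 * m + 4 - l), (1 : ℤ) = Ring.choose (3 * m + 2 - i) 3 := by
    rw [sum_congr rfl fun j hj' => hl i j (mem_Icc.mp hj').2,
      Int.sum_Icc_ringChoose_sub (by omega) (by omega) (by omega)]
    ring_nf
  rw [sum_congr rfl fun i hi => hj i (mem_Icc.mp hi).2,
    Int.sum_Icc_ringChoose_sub (by omega) (by omega) (by omega),
    show 3 * m + 2 + 1 - (2 * m + 2) = m + 1 by ring,
    show (4 * m + 3 + 1) * (4 * m + 3 - 3) * (4 * m + 3 - 7) * (4 * m + 3 - 11)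
      = 6144 * Ring.choose (m + 1) 4 by linear_combination (-256) * Int.ringChoose_four (m + 1),
    Int.mul_ediv_cancel_left _ (by norm_num)]
end
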